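/- arXiv:2210.04334 — 10 statements merged into one kernel-verified Lean document; each statement's English description precedes it below -/
import Mathlib

section
/- Theorem 1 (FDR control of single-step QuTE, independent p-values): for every graph G and every level α ∈ (0,1), if the N p-values are mutually independent and every null p-value is superuniform, then the single-step QuTE procedure (c = 1) at level α satisfies FDR ≤ α·|H^0|/N. -/
open MeasureTheory ProbabilityTheory Finset

open Classical in
/-- The Benjamini–Hochberg count `k̂_α(P)`: the largest `k ∈ {0,…,N}` such that
at least `k` of the p-values are `≤ α k / N`, where `N` is the number of hypotheses. -/
noncomputable def bhCount {I : Type*} [Fintype I] (α : ℝ) (P : I → ℝ) : ℕ :=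
  Nat.findGreatest
    (fun k => k ≤ (Finset.univ.filter fun i => P i ≤ α * k / (Fintype.card I)).card)
    (Fintype.card I)

open Classical in
/-- The Benjamini–Hochberg rejection set `Rej_α(P) = {i : P i ≤ α k̂_α(P) / N}`. -/
noncomputable def bhRej {I : Type*} [Fintype I] (α : ℝ) (P : I → ℝ) : Finset I :=
  Finset.univ.filter fun i => P i ≤ α * (bhCount α P) / (Fintype.card I)

open Classical in
/-- The p-value vector `P^{b,c}` known to node `b` after `c` rounds of communication:
every p-value hosted at a node of graph distance more than `c` from `b` is replaced by `1`. -/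
noncomputable def quteMasked {V : Type*} (G : SimpleGraph V) (n : V → ℕ)
    (c : ℕ) (P : (Σ a : V, Fin (n a)) → ℝ) (b : V) : (Σ a : V, Fin (n a)) → ℝ :=
  fun i => if G.edist b i.1 ≤ c then P i else 1

open Classical in
/-- The rejection set of the `c`-step QuTE procedure at level `α`: hypothesis `j` at node `a`
is rejected iff some node `b` within graph distance `c` of `a` rejects it in its local BH test
at level `α` on the p-values it knows (unknown p-values set to `1`). -/
noncomputable def quteRej {V : Type*} [Fintype V] (G : SimpleGraph V) (n : V → ℕ)
    (c : ℕ) (α : ℝ) (P : (Σ a : V, Fin (n a)) → ℝ) : Finset (Σ a : V, Fin (n a)) :=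
  Finset.univ.filter fun i => ∃ b : V, G.edist i.1 b ≤ c ∧
    P i ≤ α * (bhCount α (quteMasked G n c P b)) / (Fintype.card (Σ a : V, Fin (n a)))

/-!
Write `K(P) = max(1, max_b k̂^{b,c}(P))`. Every QuTE rejection `i` has `P_i ≤ α K(P) / N`, and
`K(P) ≤ max(R, 1)`: the p-values counted by a local BH count `k̂^{b,c}` sit within distance `c`
of `b` (the masked ones equal `1` and exceed the threshold), so they are all rejected. On the event
`P_i ≤ α K(P) / N` the value of `K` does not change when `P_i` is replaced by `0`; hence, with
`K_i = K(P with P_i := 0)`, the false discovery proportion is at most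
`∑_{i ∈ H⁰} 1{P_i ≤ α K_i / N} / K_i`. As `K_i` is a function of the other p-values it is
independent of `P_i`, and splitting on `K_i = k` and using superuniformity bounds the expectation
of each summand by `α / N`. None of this uses `c = 1`.
-/

theorem Finset.measurable_sup_of_orderBot {α δ ι : Type*} [MeasurableSpace α] [MeasurableSpace δ]
    [SemilatticeSup α] [OrderBot α] [MeasurableSup₂ α] (s : Finset ι) {f : ι → δ → α}
    (hf : ∀ i ∈ s, Measurable (f i)) : Measurable fun x => s.sup fun i => f i x := by
  induction s using Finset.cons_induction with
  | empty => simp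
  | cons a s ha ih =>
    simp only [sup_cons]
    exact (hf a (mem_cons_self a s)).sup (ih fun i hi => hf i (mem_cons_of_mem hi))

section LeaveOneOut

variable {Ω : Type*} {X : Ω → ℕ} {p : Ω → ℝ} {c : ℝ} {M : ℕ}

theorem ite_le_mul_inv_eq_sum_indicator (hX : ∀ ω, X ω ∈ Icc 1 M) (ω : Ω) :
    (if p ω ≤ c * X ω then (X ω : ℝ)⁻¹ else 0) =
      ∑ k ∈ Icc 1 M, (X ⁻¹' {k} ∩ p ⁻¹' Set.Iic (c * k)).indicator (fun _ => (k : ℝ)⁻¹) ω := by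
  rw [sum_eq_single_of_mem (X ω) (hX ω)]
  · by_cases h : p ω ≤ c * X ω <;> simp [h]
  · exact fun k _ hk => Set.indicator_of_notMem (fun hω => hk hω.1.symm) _

variable [MeasurableSpace Ω] {μ : Measure Ω}

theorem integrable_ite_le_mul_inv [IsFiniteMeasure μ] (hXm : Measurable X) (hpm : Measurable p)
    (hX : ∀ ω, X ω ∈ Icc 1 M) :
    Integrable (fun ω => if p ω ≤ c * X ω then (X ω : ℝ)⁻¹ else 0) μ := by
  simp_rw [ite_le_mul_inv_eq_sum_indicator hX]
  exact integrable_finsetSum _ fun k _ =>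
    (integrable_const _).indicator ((hXm (measurableSet_singleton k)).inter (hpm measurableSet_Iic))

theorem integral_ite_le_mul_inv_le [IsProbabilityMeasure μ] (hXm : Measurable X)
    (hpm : Measurable p) (hXp : IndepFun X p μ) (hc : 0 ≤ c) (hX : ∀ ω, X ω ∈ Icc 1 M)
    (hcM : c * M ≤ 1) (hp : ∀ u ∈ Set.Icc (0 : ℝ) 1, μ {ω | p ω ≤ u} ≤ ENNReal.ofReal u) :
    ∫ ω, (if p ω ≤ c * X ω then (X ω : ℝ)⁻¹ else 0) ∂μ ≤ c := by
  have hmeas (k : ℕ) : MeasurableSet (X ⁻¹' {k} ∩ p ⁻¹' Set.Iic (c * k)) :=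
    (hXm (measurableSet_singleton k)).inter (hpm measurableSet_Iic)
  have hsuper {k : ℕ} (hk : k ∈ Icc 1 M) : μ.real (p ⁻¹' Set.Iic (c * k)) ≤ c * k := by
    have hkM : (k : ℝ) ≤ M := by exact_mod_cast (mem_Icc.1 hk).2
    have hck : c * k ∈ Set.Icc (0 : ℝ) 1 := ⟨by positivity, by nlinarith⟩
    exact ENNReal.toReal_le_of_le_ofReal hck.1 (hp _ hck)
  calc ∫ ω, (if p ω ≤ c * X ω then (X ω : ℝ)⁻¹ else 0) ∂μ
      = ∑ k ∈ Icc 1 M, μ.real (X ⁻¹' {k}) * μ.real (p ⁻¹' Set.Iic (c * k)) * (k : ℝ)⁻¹ := by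
        simp_rw [ite_le_mul_inv_eq_sum_indicator hX]
        rw [integral_finsetSum _ fun k _ => (integrable_const _).indicator (hmeas k)]
        refine sum_congr rfl fun k _ => ?_
        rw [integral_indicator_const _ (hmeas k), smul_eq_mul, measureReal_def,
          hXp.measure_inter_preimage_eq_mul _ _ (measurableSet_singleton k) measurableSet_Iic,
          ENNReal.toReal_mul, measureReal_def, measureReal_def]
    _ ≤ ∑ k ∈ Icc 1 M, μ.real (X ⁻¹' {k}) * c := by
        refine sum_le_sum fun k hk => ?_
        have hk0 : (0 : ℝ) < k := by exact_mod_cast (mem_Icc.1 hk).1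
        calc μ.real (X ⁻¹' {k}) * μ.real (p ⁻¹' Set.Iic (c * k)) * (k : ℝ)⁻¹
            ≤ μ.real (X ⁻¹' {k}) * (c * k) * (k : ℝ)⁻¹ := by gcongr; exact hsuper hk
          _ = μ.real (X ⁻¹' {k}) * c := by field_simp
    _ = μ.real (X ⁻¹' Icc 1 M) * c := by
        rw [← sum_mul, sum_measureReal_preimage_singleton _ fun k _ =>
          hXm (measurableSet_singleton k)]
    _ ≤ c := mul_le_of_le_one_left hc measureReal_le_one

end LeaveOneOut

theorem ProbabilityTheory.iIndepFun.indepFun_update {Ω ι β : Type*} [MeasurableSpace Ω]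
    [MeasurableSpace β] [Fintype ι] [DecidableEq ι] {μ : Measure Ω} {f : ι → Ω → β}
    (hf : iIndepFun f μ) (hfm : ∀ i, Measurable (f i)) (i : ι) (x : β) :
    IndepFun (fun ω => Function.update (fun j => f j ω) i x) (f i) μ := by
  have hST : Disjoint (univ.erase i) {i} := disjoint_singleton_right.2 (notMem_erase i univ)
  convert (hf.indepFun_finset _ _ hST hfm).comp (measurable_updateFinset (x := fun _ => x))
    (measurable_pi_apply ⟨i, mem_singleton_self i⟩) using 1
  · ext ω j
    by_cases hji : j = i
    · subst hji; simp [Function.updateFinset]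
    · simp [Function.updateFinset, hji]
  · rfl

section BenjaminiHochberg

variable {I : Type*} [Fintype I] {α : ℝ}

theorem bhCount_le_card (α : ℝ) (P : I → ℝ) : bhCount α P ≤ Fintype.card I :=
  Nat.findGreatest_le _

open Classical in
theorem bhCount_le_card_filter (α : ℝ) (P : I → ℝ) :
    bhCount α P ≤ #{i | P i ≤ α * bhCount α P / Fintype.card I} :=
  Nat.findGreatest_spec (P := fun k => k ≤ #{i | P i ≤ α * k / Fintype.card I})
    (Nat.zero_le _) (Nat.zero_le _)

theorem bhCount_le_bhCount_of_imp {P Q : I → ℝ}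
    (h : ∀ i, P i ≤ α * bhCount α P / Fintype.card I →
      Q i ≤ α * bhCount α P / Fintype.card I) :
    bhCount α P ≤ bhCount α Q := by
  classical
  refine Nat.le_findGreatest (bhCount_le_card α P) ((bhCount_le_card_filter α P).trans ?_)
  exact card_le_card fun i hi => by simpa using h i (by simpa using hi)

theorem bhCount_antitone (α : ℝ) : Antitone (bhCount (I := I) α) :=
  fun _ _ hPQ => bhCount_le_bhCount_of_imp fun i => (hPQ i).trans

open Classical in
theorem measurable_card_filter_le (t : ℝ) :
    Measurable fun P : I → ℝ => #{i | P i ≤ t} := by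
  simp only [card_filter]
  exact Finset.measurable_sum _ fun i _ =>
    Measurable.ite (measurableSet_le (measurable_pi_apply i) measurable_const)
      measurable_const measurable_const

theorem measurable_bhCount (α : ℝ) : Measurable (bhCount (I := I) α) :=
  measurable_findGreatest fun k _ =>
    measurable_card_filter_le _ (MeasurableSet.of_discrete (s := Set.Ici k))

end BenjaminiHochberg

section QuTE

variable {V : Type*} {G : SimpleGraph V} {n : V → ℕ} {c : ℕ} {α : ℝ}

local notation "Hyp" => Σ a : V, Fin (n a)
local notation "N" => Fintype.card (Σ a : V, Fin (n a))

theorem quteMasked_apply_of_edist_le {P : Hyp → ℝ} {b : V} {i : Hyp}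
    (h : G.edist b i.1 ≤ c) : quteMasked G n c P b i = P i :=
  if_pos h

theorem quteMasked_apply_of_not_edist_le {P : Hyp → ℝ} {b : V} {i : Hyp}
    (h : ¬G.edist b i.1 ≤ c) : quteMasked G n c P b i = 1 :=
  if_neg h

theorem quteMasked_mono {P Q : Hyp → ℝ} (hPQ : P ≤ Q) (b : V) :
    quteMasked G n c P b ≤ quteMasked G n c Q b := by
  intro i
  unfold quteMasked
  split_ifs
  exacts [hPQ i, le_rfl]

theorem measurable_quteMasked (b : V) : Measurable fun P : Hyp → ℝ => quteMasked G n c P b := by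
  refine measurable_pi_lambda _ fun i => ?_
  unfold quteMasked
  split_ifs
  exacts [measurable_pi_apply i, measurable_const]

variable [Fintype V]

variable (G n c α) in
/-- `max_b k̂^{b,c}`, floored at `1` so that it can serve as a denominator. -/
noncomputable def quteMaxCount (P : Hyp → ℝ) : ℕ :=
  max (univ.sup fun b => bhCount α (quteMasked G n c P b)) 1

theorem one_le_quteMaxCount (P : Hyp → ℝ) : 1 ≤ quteMaxCount G n c α P :=
  le_max_right _ _

theorem bhCount_le_quteMaxCount (P : Hyp → ℝ) (b : V) :
    bhCount α (quteMasked G n c P b) ≤ quteMaxCount G n c α P :=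
  (le_sup (f := fun b => bhCount α (quteMasked G n c P b)) (mem_univ b)).trans
    (le_max_left _ _)

theorem quteMaxCount_le_card (hN : 0 < N) (P : Hyp → ℝ) : quteMaxCount G n c α P ≤ N :=
  max_le (Finset.sup_le fun _ _ => bhCount_le_card α _) hN

theorem quteMaxCount_antitone : Antitone (quteMaxCount G n c α) := fun _ _ hPQ =>
  max_le_max_right 1 <| Finset.sup_mono_fun fun b _ =>
    bhCount_antitone α (quteMasked_mono hPQ b)

theorem measurable_quteMaxCount : Measurable (quteMaxCount G n c α) :=
  (Finset.measurable_sup_of_orderBot _ fun b _ =>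
    (measurable_bhCount α).comp (measurable_quteMasked b)).max measurable_const

theorem le_quteMaxCount_of_mem_quteRej (hα : 0 ≤ α) {P : Hyp → ℝ} {i : Hyp}
    (hi : i ∈ quteRej G n c α P) : P i ≤ α * quteMaxCount G n c α P / N := by
  simp only [quteRej, mem_filter, mem_univ, true_and] at hi
  obtain ⟨b, -, hb⟩ := hi
  refine hb.trans ?_
  gcongr
  exact bhCount_le_quteMaxCount P b

theorem quteMaxCount_le_card_quteRej (hα : α < 1) (P : Hyp → ℝ) :
    quteMaxCount G n c α P ≤ max #(quteRej G n c α P) 1 := by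
  classical
  refine max_le_max_right 1 (Finset.sup_le fun b _ => ?_)
  set k := bhCount α (quteMasked G n c P b)
  rcases Nat.eq_zero_or_pos k with hk | hk
  · simp [hk]
  have hkN : k ≤ N := bhCount_le_card α _
  -- the threshold is below `1`, so masked p-values are never counted
  have hthreshold : α * k / N < 1 := by
    have hkN' : (k : ℝ) ≤ N := by exact_mod_cast hkN
    have hk' : (0 : ℝ) < k := by exact_mod_cast hk
    rw [div_lt_one (hk'.trans_le hkN')]
    nlinarith
  refine (bhCount_le_card_filter α _).trans (card_le_card fun j hj => ?_)
  rw [mem_filter_univ] at hj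
  by_cases hbj : G.edist b j.1 ≤ c
  · rw [quteMasked_apply_of_edist_le hbj] at hj
    exact (mem_filter_univ _).2 ⟨b, by rwa [SimpleGraph.edist_comm], hj⟩
  · rw [quteMasked_apply_of_not_edist_le hbj] at hj
    linarith

variable [DecidableEq V]

omit [Fintype V] in
theorem quteMasked_update_of_ne {P : Hyp → ℝ} {i j : Hyp} (hji : j ≠ i) (x : ℝ) (b : V) :
    quteMasked G n c (Function.update P i x) b j = quteMasked G n c P b j := by
  simp only [quteMasked, Function.update_of_ne hji]

theorem quteMaxCount_update_le (hα : 0 ≤ α) {P : Hyp → ℝ} {i : Hyp}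
    (hi : P i ≤ α * quteMaxCount G n c α P / N) (x : ℝ) :
    quteMaxCount G n c α (Function.update P i x) ≤ quteMaxCount G n c α P := by
  refine max_le (Finset.sup_le fun b _ => ?_) (one_le_quteMaxCount P)
  by_contra! hlt
  have hPi : P i ≤ α * bhCount α (quteMasked G n c (Function.update P i x) b) / N :=
    hi.trans (by gcongr)
  have hle : bhCount α (quteMasked G n c (Function.update P i x) b)
      ≤ bhCount α (quteMasked G n c P b) := by
    refine bhCount_le_bhCount_of_imp fun j hj => ?_
    rcases eq_or_ne j i with rfl | hji
    · by_cases hbj : G.edist b j.1 ≤ c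
      · rwa [quteMasked_apply_of_edist_le hbj]
      · rwa [quteMasked_apply_of_not_edist_le hbj] at hj ⊢
    · rwa [quteMasked_update_of_ne hji] at hj
  exact (hle.trans (bhCount_le_quteMaxCount P b)).not_gt hlt

theorem quteMaxCount_update_zero_eq (hα : 0 ≤ α) {P : Hyp → ℝ} {i : Hyp} (hPi : 0 ≤ P i)
    (hi : P i ≤ α * quteMaxCount G n c α P / N) :
    quteMaxCount G n c α (Function.update P i 0) = quteMaxCount G n c α P :=
  (quteMaxCount_update_le hα hi 0).antisymm
    (quteMaxCount_antitone (update_le_iff.2 ⟨hPi, fun _ _ => le_rfl⟩))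

theorem card_quteRej_inter_div_le_sum (hα₀ : 0 ≤ α) (hα₁ : α < 1) {P : Hyp → ℝ} (hP : 0 ≤ P)
    (H0 : Finset Hyp) :
    (#(quteRej G n c α P ∩ H0) : ℝ) / (max #(quteRej G n c α P) 1 : ℕ) ≤
      ∑ i ∈ H0, if P i ≤ α / N * quteMaxCount G n c α (Function.update P i 0)
        then (quteMaxCount G n c α (Function.update P i 0) : ℝ)⁻¹ else 0 := by
  rw [inter_comm, ← filter_mem_eq_inter, card_filter, Nat.cast_sum, sum_div]
  refine sum_le_sum fun i _ => ?_
  by_cases hi : i ∈ quteRej G n c α P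
  · have hPi := le_quteMaxCount_of_mem_quteRej hα₀ hi
    rw [if_pos hi, quteMaxCount_update_zero_eq hα₀ (hP i) hPi,
      if_pos (by rwa [div_mul_eq_mul_div]), Nat.cast_one, one_div]
    exact inv_anti₀ (by exact_mod_cast one_le_quteMaxCount P)
      (by exact_mod_cast quteMaxCount_le_card_quteRej hα₁ P)
  · rw [if_neg hi, Nat.cast_zero, zero_div]
    split_ifs <;> positivity

end QuTE

theorem qute_single_step_fdr_control_indep_general
    {V : Type*} [Fintype V] [DecidableEq V] (G : SimpleGraph V)
    (n : V → ℕ)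
    {Ω : Type*} [MeasurableSpace Ω] (μ : Measure Ω) [IsProbabilityMeasure μ]
    (P : Ω → (Σ a : V, Fin (n a)) → ℝ)
    (hPmeas : ∀ i, Measurable fun ω => P ω i)
    (hPrange : ∀ ω i, P ω i ∈ Set.Icc (0 : ℝ) 1)
    (hindep : iIndepFun
      (fun i ω => P ω i) μ)
    (H0 : Finset (Σ a : V, Fin (n a)))
    (hnull : ∀ i ∈ H0, ∀ u ∈ Set.Icc (0 : ℝ) 1,
      μ {ω | P ω i ≤ u} ≤ ENNReal.ofReal u)
    (α : ℝ) (hα : α ∈ Set.Ioo (0 : ℝ) 1) :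
    ∫ ω, (((quteRej G n 1 α (P ω) ∩ H0).card : ℝ) /
        (max ((quteRej G n 1 α (P ω)).card) 1 : ℕ)) ∂μ
      ≤ α * H0.card / Fintype.card (Σ a : V, Fin (n a)) := by
  obtain ⟨hα₀, hα₁⟩ := hα
  set N := Fintype.card (Σ a : V, Fin (n a))
  let K (i : Σ a : V, Fin (n a)) (ω : Ω) : ℕ := quteMaxCount G n 1 α (Function.update (P ω) i 0)
  have hKm (i) : Measurable (K i) :=
    measurable_quteMaxCount.comp (measurable_update_left.comp (measurable_pi_iff.2 hPmeas))
  have hKrange (i) (ω) : K i ω ∈ Icc 1 N :=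
    mem_Icc.2 ⟨one_le_quteMaxCount _, quteMaxCount_le_card (Fintype.card_pos_iff.2 ⟨i⟩) _⟩
  have hint (i) := integrable_ite_le_mul_inv (μ := μ) (c := α / N) (hKm i) (hPmeas i) (hKrange i)
  have hbound (i) (hi : i ∈ H0) :
      ∫ ω, (if P ω i ≤ α / N * K i ω then (K i ω : ℝ)⁻¹ else 0) ∂μ ≤ α / N := by
    have hN : (0 : ℝ) < N := by exact_mod_cast Fintype.card_pos_iff.2 ⟨i⟩
    refine integral_ite_le_mul_inv_le (hKm i) (hPmeas i)
      ((hindep.indepFun_update hPmeas i 0).comp measurable_quteMaxCount measurable_id)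
      (by positivity) (hKrange i) ?_ (hnull i hi)
    rw [div_mul_cancel₀ _ hN.ne']
    exact hα₁.le
  calc _ ≤ ∫ ω, ∑ i ∈ H0, (if P ω i ≤ α / N * K i ω then (K i ω : ℝ)⁻¹ else 0) ∂μ :=
        integral_mono_of_nonneg (ae_of_all _ fun ω => by positivity)
          (integrable_finsetSum _ fun i _ => hint i)
          (ae_of_all _ fun ω =>
            card_quteRej_inter_div_le_sum hα₀.le hα₁ (fun j => (hPrange ω j).1) H0)
    _ ≤ ∑ _i ∈ H0, α / N := by
        rw [integral_finsetSum _ fun i _ => hint i]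
        exact sum_le_sum hbound
    _ = α * #H0 / N := by rw [sum_const, nsmul_eq_mul]; ring

/-- **Theorem 1 (FDR control of single-step QuTE, independent p-values).**
For every graph `G` and level `α ∈ (0,1)`, if the `N` p-values are mutually independent
and every null p-value is superuniform, then single-step QuTE (`c = 1`) at level `α`
satisfies `FDR ≤ α |H⁰| / N`. -/
theorem qute_single_step_fdr_control_indep
    {V : Type*} [Fintype V] [DecidableEq V] [Nonempty V] (G : SimpleGraph V)
    (n : V → ℕ) (hn : ∀ a, 1 ≤ n a)
    {Ω : Type*} [MeasurableSpace Ω] (μ : Measure Ω) [IsProbabilityMeasure μ]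
    (P : Ω → (Σ a : V, Fin (n a)) → ℝ)
    (hPmeas : ∀ i, Measurable fun ω => P ω i)
    (hPrange : ∀ ω i, P ω i ∈ Set.Icc (0 : ℝ) 1)
    (hindep : iIndepFun
      (fun i ω => P ω i) μ)
    (H0 : Finset (Σ a : V, Fin (n a)))
    (hnull : ∀ i ∈ H0, ∀ u ∈ Set.Icc (0 : ℝ) 1,
      μ {ω | P ω i ≤ u} ≤ ENNReal.ofReal u)
    (α : ℝ) (hα : α ∈ Set.Ioo (0 : ℝ) 1) :
    ∫ ω, (((quteRej G n 1 α (P ω) ∩ H0).card : ℝ) /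
        (max ((quteRej G n 1 α (P ω)).card) 1 : ℕ)) ∂μ
      ≤ α * H0.card / Fintype.card (Σ a : V, Fin (n a)) :=
  qute_single_step_fdr_control_indep_general G n μ P hPmeas hPrange hindep H0 hnull α hα
end

section
/- Proposition 1 (monotonicity of QuTE in the edge set): fix a level α ∈ (0,1), a finite vertex set V, the hypotheses hosted at each node, and a fixed (deterministic) assignment of p-values. If G₁ and G₂ are undirected graphs on V with E(G₂) ⊆ E(G₁), then the set of hypotheses rejected by the single-step QuTE procedure on G₂ is contained in the set of hypotheses rejected by the single-step QuTE procedure on G₁; in particular, the number of rejections is nondecreasing with respect to the partial ordering of graphs by edge-set inclusion. -/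
open MeasureTheory ProbabilityTheory Finset

open Classical in
lemma bhCount_anti {I : Type*} [Fintype I] {α : ℝ} {P Q : I → ℝ}
    (h : ∀ i, P i ≤ Q i) : bhCount α Q ≤ bhCount α P := by
  unfold bhCount
  have hspec : bhCount α Q ≤
      (Finset.univ.filter fun i => Q i ≤ α * (bhCount α Q) / (Fintype.card I)).card := by
    have := Nat.findGreatest_spec (P := fun k =>
        k ≤ (Finset.univ.filter fun i => Q i ≤ α * k / (Fintype.card I)).card)
      (Nat.zero_le (Fintype.card I)) (Nat.zero_le _)
    exact this
  refine Nat.le_findGreatest (Nat.findGreatest_le _) ?_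
  refine hspec.trans (Finset.card_le_card ?_)
  intro i hi
  simp only [Finset.mem_filter, Finset.mem_univ, true_and] at hi ⊢
  exact (h i).trans hi

/-- **Proposition 1 (monotonicity of QuTE in the edge set).**
Fix a level `α ∈ (0,1)`, the vertex set, the hypotheses at each node and a fixed
assignment of p-values. If `E(G₂) ⊆ E(G₁)`, then every hypothesis rejected by single-step
QuTE on `G₂` is also rejected by single-step QuTE on `G₁`; in particular the number of
rejections is nondecreasing in the edge set. -/
theorem quteRej_mono_in_edges
    {V : Type*} [Fintype V] (G₁ G₂ : SimpleGraph V) (hG : G₂ ≤ G₁)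
    (n : V → ℕ) (hn : ∀ a, 1 ≤ n a)
    (P : (Σ a : V, Fin (n a)) → ℝ) (hPrange : ∀ i, P i ∈ Set.Icc (0 : ℝ) 1)
    (α : ℝ) (hα : α ∈ Set.Ioo (0 : ℝ) 1) :
    quteRej G₂ n 1 α P ⊆ quteRej G₁ n 1 α P ∧
      (quteRej G₂ n 1 α P).card ≤ (quteRej G₁ n 1 α P).card := by
  have hsub : quteRej G₂ n 1 α P ⊆ quteRej G₁ n 1 α P := by
    intro i hi
    simp only [quteRej, Finset.mem_filter, Finset.mem_univ, true_and] at hi ⊢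
    obtain ⟨b, hdist, hle⟩ := hi
    refine ⟨b, (SimpleGraph.edist_anti hG).trans hdist, hle.trans ?_⟩
    have hmask : ∀ j, quteMasked G₁ n 1 P b j ≤ quteMasked G₂ n 1 P b j := by
      intro j
      simp only [quteMasked]
      split_ifs with h1 h2 h2
      · exact le_refl _
      · exact (hPrange j).2
      · exact absurd ((SimpleGraph.edist_anti hG).trans h2) h1
      · exact le_refl _
    have hk : bhCount α (quteMasked G₂ n 1 P b) ≤ bhCount α (quteMasked G₁ n 1 P b) :=
      bhCount_anti hmask
    have hN : (0:ℝ) ≤ (Fintype.card (Σ a : V, Fin (n a)) : ℝ) := by positivity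
    gcongr
    exact hα.1.le
  exact ⟨hsub, Finset.card_le_card hsub⟩
end

section
/- Sufficient communication recovers centralized BH: if there exists a vertex u of G whose graph distance to every vertex of G is at most c (i.e., u has eccentricity at most c; the paper notes that c equal to half the diameter suffices in such cases), then for every level α ∈ (0,1) and every fixed assignment of p-values, the set of hypotheses rejected by the c-step QuTE procedure at level α equals the centralized BH rejection set Rej_α(P) of the full p-value vector at level α; in particular, further rounds of communication (any c' ≥ c) do not change the rejection set. -/
open MeasureTheory ProbabilityTheory Finset

open Classical in
lemma bhCount_antitone_s8 {I : Type*} [Fintype I] {α : ℝ} (hα : 0 ≤ α)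
    {P Q : I → ℝ} (h : ∀ i, P i ≤ Q i) : bhCount α Q ≤ bhCount α P := by
  refine Nat.findGreatest_mono (fun k hk => ?_) le_rfl
  refine hk.trans (Finset.card_le_card ?_)
  intro i hi
  simp only [Finset.mem_filter, Finset.mem_univ, true_and] at hi ⊢
  exact (h i).trans hi

/-- **Sufficient communication recovers centralized BH.**
If some vertex `u` has graph distance at most `c` to every vertex (eccentricity ≤ `c`),
then for every level `α ∈ (0,1)` and every fixed assignment of p-values, `c`-step QuTE at
level `α` rejects exactly the centralized BH rejection set; in particular any further
rounds of communication (`c' ≥ c`) give the same rejection set. -/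


theorem quteRej_eccentricity_le_eq_bhRej
    {V : Type*} [Fintype V] (G : SimpleGraph V) (c : ℕ)
    (u : V) (hu : ∀ v : V, G.edist u v ≤ c)
    (n : V → ℕ) (hn : ∀ a, 1 ≤ n a)
    (P : (Σ a : V, Fin (n a)) → ℝ) (hPrange : ∀ i, P i ∈ Set.Icc (0 : ℝ) 1)
    (α : ℝ) (hα : α ∈ Set.Ioo (0 : ℝ) 1) :
    quteRej G n c α P = bhRej α P ∧
      ∀ c' : ℕ, c ≤ c' → quteRej G n c' α P = bhRej α P := by
  classical
  have key : ∀ c' : ℕ, (∀ v, G.edist u v ≤ c') → quteRej G n c' α P = bhRej α P := by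
    intro c' hu'
    have hmask : quteMasked G n c' P u = P := by
      funext i; simp [quteMasked, hu' i.1]
    ext i
    simp only [quteRej, bhRej, Finset.mem_filter, Finset.mem_univ, true_and]
    constructor
    · rintro ⟨b, _, hb⟩
      refine hb.trans ?_
      have hcount : bhCount α (quteMasked G n c' P b) ≤ bhCount α P := by
        apply bhCount_antitone_s8 hα.1.le
        intro j
        by_cases h : G.edist b j.1 ≤ (c' : ℕ∞) <;>
          simp [quteMasked, h, (hPrange j).2]
      have hN : (0:ℝ) ≤ (Fintype.card (Σ a : V, Fin (n a)) : ℝ) := Nat.cast_nonneg _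
      rcases hN.eq_or_lt with h0 | h0
      · rw [← h0]; simp
      · rw [div_le_div_iff_of_pos_right h0]
        exact mul_le_mul_of_nonneg_left (Nat.cast_le.mpr hcount) hα.1.le
    · intro h
      refine ⟨u, ?_, by rwa [hmask]⟩
      rw [SimpleGraph.edist_comm]; exact hu' i.1
  exact ⟨key c hu, fun c' hc' => key c' fun v => (hu v).trans (Nat.cast_le.mpr hc')⟩
end

section
/- Quantized BH rejection count equals BH rejection count: for every level α ∈ (0,1), every N ≥ 1 and every p-value vector P : {1,…,N} → [0,1], the quantized BH count k̂^Q equals the BH count k̂_α(P). -/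
open Finset

open Classical in
/-- The quantized p-rank: `p-rank_i = ⌈N P_i / α⌉` if `P_i ≤ α`, and `N + 1` otherwise. -/
noncomputable def pRank {N : ℕ} (α : ℝ) (P : Fin N → ℝ) (i : Fin N) : ℕ :=
  if P i ≤ α then ⌈(N : ℝ) * P i / α⌉₊ else N + 1

open Classical in
/-- The quantized BH count `k̂^Q`: the largest `k ∈ {0,…,N}` such that at least `k` of the
p-ranks are `≤ k`. -/
noncomputable def bhQCount {N : ℕ} (α : ℝ) (P : Fin N → ℝ) : ℕ :=
  Nat.findGreatest (fun k => k ≤ (Finset.univ.filter fun i => pRank α P i ≤ k).card) N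

lemma findGreatest_congr_le (P Q : ℕ → Prop) [DecidablePred P] [DecidablePred Q]
    (N : ℕ) (h : ∀ k ≤ N, (P k ↔ Q k)) :
    Nat.findGreatest P N = Nat.findGreatest Q N := by
  induction N with
  | zero => rfl
  | succ n ih =>
    rw [Nat.findGreatest_succ, Nat.findGreatest_succ,
      if_congr (h (n+1) le_rfl) rfl (ih (fun k hk => h k (hk.trans (Nat.le_succ n))))]

/-- **Quantized BH rejection count equals BH rejection count**: for every level `α ∈ (0,1)`,
every `N ≥ 1` and every p-value vector `P : Fin N → [0,1]`, `k̂^Q = k̂_α(P)`. -/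
theorem bhQCount_eq_bhCount
    {N : ℕ} (hN : 1 ≤ N) (α : ℝ) (hα : α ∈ Set.Ioo (0 : ℝ) 1)
    (P : Fin N → ℝ) (hPrange : ∀ i, P i ∈ Set.Icc (0 : ℝ) 1) :
    bhQCount α P = bhCount α P := by
  classical
  have hNpos : (0:ℝ) < N := by exact_mod_cast hN
  have hα0 := hα.1
  have key : ∀ k ≤ N, ∀ i, (pRank α P i ≤ k ↔ P i ≤ α * k / N) := by
    intro k hk i
    unfold pRank
    constructor
    · intro h
      by_cases hPα : P i ≤ α
      · simp only [hPα, if_true] at h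
        rw [Nat.ceil_le, div_le_iff₀ hα0] at h
        rw [le_div_iff₀ hNpos]
        linarith
      · simp only [hPα, if_false] at h; omega
    · intro h
      have hkN : (k:ℝ) ≤ N := by exact_mod_cast hk
      have hPα : P i ≤ α := by
        calc P i ≤ α * k / N := h
          _ ≤ α * N / N := by
            gcongr
          _ = α := by field_simp
      rw [le_div_iff₀ hNpos] at h
      simp only [hPα, if_true]
      rw [Nat.ceil_le, div_le_iff₀ hα0]
      linarith
  simp only [bhQCount, bhCount, Fintype.card_fin]
  apply findGreatest_congr_le
  intro k hk
  constructor <;> intro h <;> refine h.trans (le_of_eq (congrArg Finset.card ?_)) <;>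
    apply Finset.filter_congr <;> intro i _
  · exact key k hk i
  · exact (key k hk i).symm
end

section
/- Theorem 3 (quantized BH makes exactly the same discoveries as BH): for every level α ∈ (0,1), every N ≥ 1 and every p-value vector P : {1,…,N} → [0,1], the rejection set of the quantized BH procedure, {i : p-rank_i ≤ k̂^Q}, equals the BH rejection set Rej_α(P). -/
open Finset

lemma pRank_le_iff' {N : ℕ} (hN : 1 ≤ N) {α : ℝ} (hα : α ∈ Set.Ioo (0 : ℝ) 1)
    (P : Fin N → ℝ) (i : Fin N) {k : ℕ} (hk : k ≤ N) :
    pRank α P i ≤ k ↔ P i ≤ α * k / N := by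
  have hN0 : (0 : ℝ) < N := by exact_mod_cast Nat.pos_of_ne_zero (by omega)
  have hkN : (k : ℝ) ≤ N := by exact_mod_cast hk
  unfold pRank
  split_ifs with h
  · rw [Nat.ceil_le, div_le_iff₀ hα.1, le_div_iff₀ hN0]
    constructor <;> intro hle <;> nlinarith
  · push_neg at h
    constructor
    · intro hle; omega
    · intro hle
      exfalso
      have : α * k / N ≤ α := by
        rw [div_le_iff₀ hN0]; nlinarith [hα.1.le]
      linarith

lemma findGreatest_congr' {p q : ℕ → Prop} [DecidablePred p] [DecidablePred q] {n : ℕ}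
    (h : ∀ k ≤ n, (p k ↔ q k)) : Nat.findGreatest p n = Nat.findGreatest q n := by
  induction n with
  | zero => simp
  | succ n ih =>
    rw [Nat.findGreatest_succ, Nat.findGreatest_succ,
      ih (fun k hk => h k (hk.trans n.le_succ))]
    by_cases hq : q (n + 1)
    · rw [if_pos ((h _ le_rfl).mpr hq), if_pos hq]
    · rw [if_neg (fun hp => hq ((h _ le_rfl).mp hp)), if_neg hq]

/-- **Theorem 3 (quantized BH makes exactly the same discoveries as BH)**: for every level
`α ∈ (0,1)`, every `N ≥ 1` and every p-value vector `P : Fin N → [0,1]`, the quantized BH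
rejection set `{i : p-rank_i ≤ k̂^Q}` equals the BH rejection set `Rej_α(P)`. -/
theorem bhQ_rejects_same_as_bh
    {N : ℕ} (hN : 1 ≤ N) (α : ℝ) (hα : α ∈ Set.Ioo (0 : ℝ) 1)
    (P : Fin N → ℝ) (hPrange : ∀ i, P i ∈ Set.Icc (0 : ℝ) 1) :
    (Finset.univ.filter fun i => pRank α P i ≤ bhQCount α P) = bhRej α P := by
  classical
  have hcard : (Fintype.card (Fin N)) = N := Fintype.card_fin N
  have hcounts : bhQCount α P = bhCount α P := by
    unfold bhQCount bhCount
    rw [hcard]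
    refine findGreatest_congr' (fun k hk => ?_)
    have : (Finset.univ.filter fun i => pRank α P i ≤ k) =
        (Finset.univ.filter fun i => P i ≤ α * k / N) := by
      apply Finset.filter_congr
      intro i _
      exact pRank_le_iff' hN hα P i hk
    rw [this]
  have hle : bhQCount α P ≤ N := Nat.findGreatest_le N
  ext i
  simp only [bhRej, Finset.mem_filter, Finset.mem_univ, true_and, hcard]
  rw [hcounts] at hle ⊢
  exact pRank_le_iff' hN hα P i hle
end

section
/- Local BH on a subset equals padded global BH: let α ∈ (0,1), N ≥ 1, P : {1,…,N} → [0,1], and let S ⊆ {1,…,N} with m = |S| ≥ 1. Let P^S denote the vector P with every coordinate outside S replaced by 1. Then the BH procedure run on the m p-values (P_i)_{i∈S} at the adjusted level α·m/N rejects exactly the set Rej_α(P^S); in particular Rej_α(P^S) ⊆ S and the BH count of (P_i)_{i∈S} at level α·m/N equals k̂_α(P^S). (Equivalently: running BH at level α·m/N on the known p-values is the same as running BH at level α on all N p-values with every unknown p-value set to 1.) -/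
open Finset

/-- **Local BH on a subset equals padded global BH.**
Let `S ⊆ {1,…,N}` with `m = |S| ≥ 1`, and let `P^S` be `P` with every coordinate outside
`S` replaced by `1`. Then BH run on the `m` p-values `(P_i)_{i ∈ S}` at the adjusted level
`α m / N` rejects exactly `Rej_α(P^S)`; in particular `Rej_α(P^S) ⊆ S`, and the BH count of
`(P_i)_{i ∈ S}` at level `α m / N` equals `k̂_α(P^S)`. -/
theorem bh_local_eq_padded_global
    {N : ℕ} (hN : 1 ≤ N) (α : ℝ) (hα : α ∈ Set.Ioo (0 : ℝ) 1)
    (P : Fin N → ℝ) (hPrange : ∀ i, P i ∈ Set.Icc (0 : ℝ) 1)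
    (S : Finset (Fin N)) (hS : 1 ≤ S.card) :
    bhCount (α * S.card / N) (fun i : ↥S => P i)
        = bhCount α (fun i => if i ∈ S then P i else 1) ∧
      (S.filter fun i => P i ≤
          (α * S.card / N) * (bhCount (α * S.card / N) (fun i : ↥S => P i)) / S.card)
        = bhRej α (fun i => if i ∈ S then P i else 1) ∧
      bhRej α (fun i => if i ∈ S then P i else 1) ⊆ S := by
  classical
  obtain ⟨hα0, hα1⟩ := hα
  set m := S.card with hm
  have hmN : m ≤ N := by
    simpa using S.card_le_univ.trans_eq (by simp)
  have hm0 : (0:ℝ) < m := by exact_mod_cast hS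
  have hN0 : (0:ℝ) < N := by exact_mod_cast hN
  set P' : Fin N → ℝ := fun i => if i ∈ S then P i else 1 with hP'
  have hthr : ∀ k : ℕ, (α * m / N) * k / m = α * k / N := by
    intro k; field_simp
  have hcardS : Fintype.card ↥S = m := Fintype.card_coe S
  have hcardN : Fintype.card (Fin N) = N := Fintype.card_fin N
  have hlt : ∀ k : ℕ, k ≤ N → α * k / N < 1 := by
    intro k hk
    have h1 : α * k ≤ α * N := by
      have : (k:ℝ) ≤ N := by exact_mod_cast hk
      nlinarith
    calc α * k / N ≤ α * N / N := div_le_div_of_nonneg_right h1 hN0.le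
      _ = α := by field_simp
      _ < 1 := hα1
  -- the global filter is contained in S (for thresholds < 1)
  have hfiltS : ∀ t : ℝ, t < 1 →
      (Finset.univ.filter fun i : Fin N => P' i ≤ t) = S.filter fun i => P i ≤ t := by
    intro t ht
    ext i
    simp only [Finset.mem_filter, Finset.mem_univ, true_and, hP']
    by_cases hi : i ∈ S
    · simp [hi]
    · simp [hi]; linarith
  -- card of a filter over the subtype equals card of the filter of S
  have key : ∀ t : ℝ, (Finset.univ.filter fun i : ↥S => P i ≤ t).card
      = (S.filter fun i => P i ≤ t).card := by
    intro t
    rw [Finset.univ_eq_attach]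
    apply Finset.card_bij (fun a _ => a.1)
    · intro a ha
      rw [Finset.mem_filter] at ha ⊢
      exact ⟨a.2, ha.2⟩
    · intro a _ b _ h; exact Subtype.ext h
    · intro b hb
      rw [Finset.mem_filter] at hb
      exact ⟨⟨b, hb.1⟩, Finset.mem_filter.2 ⟨Finset.mem_attach _ _, hb.2⟩, rfl⟩
  -- count equality for k ≤ N
  have hcount : ∀ k : ℕ, k ≤ N →
      (Finset.univ.filter fun i : ↥S => P i ≤ (α * m / N) * k / m).card
        = (Finset.univ.filter fun i : Fin N => P' i ≤ α * k / N).card := by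
    intro k hk
    rw [hthr, key, hfiltS _ (hlt k hk)]
  set pred1 : ℕ → Prop := fun k =>
    k ≤ (Finset.univ.filter fun i : ↥S => P i ≤ (α * m / N) * k / m).card with hpred1
  set pred2 : ℕ → Prop := fun k =>
    k ≤ (Finset.univ.filter fun i : Fin N => P' i ≤ α * k / N).card with hpred2
  have hk1def : bhCount (α * m / N) (fun i : ↥S => P i) = Nat.findGreatest pred1 m := by
    simp only [bhCount, hcardS, hpred1]
  have hk2def : bhCount α P' = Nat.findGreatest pred2 N := by
    simp only [bhCount, hcardN, hpred2]
  set k1 := Nat.findGreatest pred1 m with hk1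
  set k2 := Nat.findGreatest pred2 N with hk2
  have hk1m : k1 ≤ m := Nat.findGreatest_le m
  have hk2N : k2 ≤ N := Nat.findGreatest_le N
  have hpred1k1 : pred1 k1 := by
    apply Nat.findGreatest_spec (Nat.zero_le m)
    simp [hpred1]
  have hpred2k2 : pred2 k2 := by
    apply Nat.findGreatest_spec (Nat.zero_le N)
    simp [hpred2]
  have hk12 : k1 ≤ k2 := by
    apply Nat.le_findGreatest (hk1m.trans hmN)
    show k1 ≤ _
    rw [← hcount k1 (hk1m.trans hmN)]
    exact hpred1k1
  have hk2m : k2 ≤ m := by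
    have := hpred2k2
    rw [hpred2] at this
    calc k2 ≤ _ := this
      _ = (S.filter fun i => P i ≤ α * k2 / N).card := by rw [hfiltS _ (hlt k2 hk2N)]
      _ ≤ m := Finset.card_le_card (Finset.filter_subset _ _)
  have hk21 : k2 ≤ k1 := by
    apply Nat.le_findGreatest hk2m
    show k2 ≤ _
    rw [hcount k2 hk2N]
    exact hpred2k2
  have hkk : k1 = k2 := le_antisymm hk12 hk21
  have hcnt : bhCount (α * m / N) (fun i : ↥S => P i) = bhCount α P' :=
    hk1def.trans (hkk.trans hk2def.symm)
  have hrej : (S.filter fun i => P i ≤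
      (α * m / N) * (bhCount (α * m / N) (fun i : ↥S => P i)) / m) = bhRej α P' := by
    rw [bhRej, hcardN, hcnt, hk2def, hthr, hfiltS _ (hlt k2 hk2N)]
  refine ⟨hcnt, hrej, ?_⟩
  rw [← hrej]
  exact Finset.filter_subset _ _
end

section
/- Super-uniformity lemma under independence: let P = (P_1,…,P_n) be a vector of mutually independent random variables with values in [0,1], fix an index i, and suppose P_i is superuniform, i.e. Pr(P_i ≤ u) ≤ u for all u ∈ [0,1]. Let f : [0,1]^n → [0,∞) be measurable and coordinatewise nonincreasing (x ≤ y coordinatewise implies f(x) ≥ f(y)). Then E[ 1{P_i ≤ f(P)} / f(P) ] ≤ 1, where the ratio is interpreted as 0 whenever the indicator equals 0 (note that superuniformity gives Pr(P_i = 0) = 0, so the event {P_i ≤ f(P), f(P) = 0} has probability zero). -/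
/-!
By independence the law of `P` is the product of the marginal laws, so `P_i` can be integrated out
first. With the other coordinates frozen, `g t = f(…, t, …)` is nonincreasing, hence on
`A = {t ∈ [0,1] | t ≤ g t}` it stays above `T = sup A`: for `s ∈ A` either `s ≤ t ≤ g t` or
`s ≤ g s ≤ g t`. The inner integral is thus at most `Pr(P_i ≤ T) / T ≤ 1` by superuniformity.
-/

open MeasureTheory ProbabilityTheory Set

open scoped ENNReal

theorem lintegral_indicator_ofReal_inv_le_one {ν : Measure ℝ}
    (hν : ∀ u ∈ Icc (0 : ℝ) 1, ν (Iic u) ≤ ENNReal.ofReal u)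
    {A : Set ℝ} (hA : A ⊆ Icc 0 1) {g : ℝ → ℝ} (hle : ∀ t ∈ A, t ≤ g t) (hg : AntitoneOn g A) :
    ∫⁻ t, A.indicator (fun t => ENNReal.ofReal (g t)⁻¹) t ∂ν ≤ 1 := by
  set T := sSup A
  have hbdd : BddAbove A := ⟨1, fun t ht => (hA ht).2⟩
  have hT : T ∈ Icc (0 : ℝ) 1 :=
    ⟨Real.sSup_nonneg fun t ht => (hA ht).1, Real.sSup_le (fun t ht => (hA ht).2) zero_le_one⟩
  have hT_le_g : ∀ t ∈ A, T ≤ g t := fun t ht => by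
    refine csSup_le ⟨t, ht⟩ fun s hs => ?_
    rcases le_total s t with hst | hts
    · exact hst.trans (hle t ht)
    · exact (hle s hs).trans (hg ht hs hts)
  have hbound : A.indicator (fun t => ENNReal.ofReal (g t)⁻¹)
      ≤ (Iic T).indicator (fun _ => (ENNReal.ofReal T)⁻¹) := by
    intro t
    by_cases ht : t ∈ A
    · rw [indicator_of_mem ht, indicator_of_mem (show t ∈ Iic T from le_csSup hbdd ht)]
      exact ENNReal.ofReal_inv_le.trans
        (ENNReal.inv_le_inv.mpr (ENNReal.ofReal_le_ofReal (hT_le_g t ht)))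
    · simp [ht]
  calc ∫⁻ t, A.indicator (fun t => ENNReal.ofReal (g t)⁻¹) t ∂ν
      ≤ ∫⁻ t, (Iic T).indicator (fun _ => (ENNReal.ofReal T)⁻¹) t ∂ν := lintegral_mono hbound
    _ = (ENNReal.ofReal T)⁻¹ * ν (Iic T) := lintegral_indicator_const measurableSet_Iic _
    _ ≤ (ENNReal.ofReal T)⁻¹ * ENNReal.ofReal T := by gcongr; exact hν T hT
    -- no case `T = 0` is needed: then `(ofReal T)⁻¹ = ∞` and `∞ * 0 = 0`
    _ ≤ 1 := ENNReal.inv_mul_le_one _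

theorem lintegral_pi_le_of_forall_lintegral_update_le {ι : Type*} [Fintype ι] [DecidableEq ι]
    {X : ι → Type*} [∀ j, MeasurableSpace (X j)] (ν : ∀ j, Measure (X j))
    [∀ j, IsProbabilityMeasure (ν j)] {F : (∀ j, X j) → ℝ≥0∞} (hF : Measurable F) (i : ι)
    {c : ℝ≥0∞} (h : ∀ x, ∫⁻ t, F (Function.update x i t) ∂ν i ≤ c) :
    ∫⁻ x, F x ∂Measure.pi ν ≤ c := by
  obtain ⟨x₀⟩ := nonempty_of_isProbabilityMeasure (Measure.pi ν)
  calc ∫⁻ x, F x ∂Measure.pi ν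
      = (∫⋯∫⁻_(Finset.univ.erase i), (fun x => ∫⁻ t, F (Function.update x i t) ∂ν i) ∂ν) x₀ := by
        rw [lintegral_eq_lmarginal_univ x₀, lmarginal_erase' F hF (Finset.mem_univ i)]
    _ ≤ (∫⋯∫⁻_(Finset.univ.erase i), (fun _ => c) ∂ν) x₀ := lmarginal_mono h x₀
    _ = c := by simp [lmarginal]

theorem superuniformity_lemma_indep_general
    {Ω : Type*} [MeasurableSpace Ω] (μ : Measure Ω) [IsProbabilityMeasure μ]
    {n : ℕ} (P : Ω → Fin n → ℝ)
    (hPmeas : ∀ j, Measurable fun ω => P ω j)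
    (hPrange : ∀ ω j, P ω j ∈ Set.Icc (0 : ℝ) 1)
    (hindep : iIndepFun (m := fun _ => (inferInstance : MeasurableSpace ℝ))
      (fun j ω => P ω j) μ)
    (i : Fin n)
    (hsup : ∀ u ∈ Set.Icc (0 : ℝ) 1, μ {ω | P ω i ≤ u} ≤ ENNReal.ofReal u)
    (f : (Fin n → ℝ) → ℝ) (hf : Measurable f)
    (hf_anti : ∀ x ∈ Set.Icc (0 : Fin n → ℝ) 1, ∀ y ∈ Set.Icc (0 : Fin n → ℝ) 1,
      x ≤ y → f y ≤ f x) :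
    ∫⁻ ω, (if P ω i ≤ f (P ω) then ENNReal.ofReal (f (P ω))⁻¹ else 0) ∂μ ≤ 1 := by
  -- cutting down to the unit box, where `P` lives, makes the inner bound hold at every point
  set B : Set (Fin n → ℝ) := {x | x ∈ Icc 0 1 ∧ x i ≤ f x}
  set F := B.indicator fun x => ENNReal.ofReal (f x)⁻¹
  have hF : Measurable F :=
    (ENNReal.measurable_ofReal.comp hf.inv).indicator
      (measurableSet_Icc.inter (measurableSet_le (measurable_pi_apply i) hf))
  have hFP : ∀ ω, (if P ω i ≤ f (P ω) then ENNReal.ofReal (f (P ω))⁻¹ else 0) = F (P ω) := by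
    intro ω
    have hbox : P ω ∈ Icc 0 1 := ⟨fun j => (hPrange ω j).1, fun j => (hPrange ω j).2⟩
    simp only [F, B, indicator, mem_ofPred_eq, hbox, true_and]
  have hlaw : μ.map P = Measure.pi fun j => μ.map fun ω => P ω j :=
    hindep.map_fun_eq_pi_map fun j => (hPmeas j).aemeasurable
  have : ∀ j, IsProbabilityMeasure (μ.map fun ω => P ω j) :=
    fun j => Measure.isProbabilityMeasure_map (hPmeas j).aemeasurable
  simp_rw [hFP]
  rw [← lintegral_map hF (measurable_pi_iff.mpr hPmeas), hlaw]
  refine lintegral_pi_le_of_forall_lintegral_update_le _ hF i fun x => ?_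
  have hsup' : ∀ u ∈ Icc (0 : ℝ) 1, (μ.map fun ω => P ω i) (Iic u) ≤ ENNReal.ofReal u :=
    fun u hu => (Measure.map_apply (hPmeas i) measurableSet_Iic).trans_le (hsup u hu)
  refine lintegral_indicator_ofReal_inv_le_one hsup'
    (A := {t | Function.update x i t ∈ B}) (g := fun t => f (Function.update x i t)) ?_ ?_ ?_
  · intro t ht
    simpa using And.intro (ht.1.1 i) (ht.1.2 i)
  · intro t ht
    simpa using ht.2
  · intro s hs t ht hst
    exact hf_anti _ hs.1 _ ht.1 (Function.update_mono hst)

/-- **Super-uniformity lemma under independence.**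
Let `P = (P_1,…,P_n)` be mutually independent `[0,1]`-valued random variables, let `P_i` be
superuniform, and let `f : [0,1]^n → [0,∞)` be measurable and coordinatewise nonincreasing.
Then `E[ 1{P_i ≤ f(P)} / f(P) ] ≤ 1`, the ratio being interpreted as `0` when the indicator
vanishes (superuniformity gives `Pr(P_i = 0) = 0`, so `{P_i ≤ f(P), f(P) = 0}` is null). -/
theorem superuniformity_lemma_indep
    {Ω : Type*} [MeasurableSpace Ω] (μ : Measure Ω) [IsProbabilityMeasure μ]
    {n : ℕ} (P : Ω → Fin n → ℝ)
    (hPmeas : ∀ j, Measurable fun ω => P ω j)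
    (hPrange : ∀ ω j, P ω j ∈ Set.Icc (0 : ℝ) 1)
    (hindep : iIndepFun (m := fun _ => (inferInstance : MeasurableSpace ℝ))
      (fun j ω => P ω j) μ)
    (i : Fin n)
    (hsup : ∀ u ∈ Set.Icc (0 : ℝ) 1, μ {ω | P ω i ≤ u} ≤ ENNReal.ofReal u)
    (f : (Fin n → ℝ) → ℝ) (hf : Measurable f)
    (hf_nonneg : ∀ x ∈ Set.Icc (0 : Fin n → ℝ) 1, 0 ≤ f x)
    (hf_anti : ∀ x ∈ Set.Icc (0 : Fin n → ℝ) 1, ∀ y ∈ Set.Icc (0 : Fin n → ℝ) 1,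
      x ≤ y → f y ≤ f x) :
    ∫⁻ ω, (if P ω i ≤ f (P ω) then ENNReal.ofReal (f (P ω))⁻¹ else 0) ∂μ ≤ 1 :=
  superuniformity_lemma_indep_general μ P hPmeas hPrange hindep i hsup f hf hf_anti
end

section
/- Super-uniformity lemma under positive dependence (PRDS): let P = (P_1,…,P_n) be a random vector with values in [0,1]^n, fix an index i, and suppose P_i is superuniform, i.e. Pr(P_i ≤ u) ≤ u for all u ∈ [0,1], and that P is PRDS on index i: for every measurable nondecreasing set D ⊆ [0,1]^n (x ∈ D and x ≤ y coordinatewise implies y ∈ D) and all 0 < s ≤ t ≤ 1 with Pr(P_i ≤ s) > 0, one has Pr(P ∈ D | P_i ≤ s) ≤ Pr(P ∈ D | P_i ≤ t). Let f : [0,1]^n → [0,∞) be measurable and coordinatewise nonincreasing (x ≤ y coordinatewise implies f(x) ≥ f(y)). Then E[ 1{P_i ≤ f(P)} / f(P) ] ≤ 1, where the ratio is interpreted as 0 whenever the indicator equals 0 (note that superuniformity gives Pr(P_i = 0) = 0, so the event {P_i ≤ f(P), f(P) = 0} has probability zero). -/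
open MeasureTheory ProbabilityTheory
open scoped ENNReal

/-!
Since `P_i ≤ 1`, replacing `f` by `min f 1` only increases the weight `1{P_i ≤ f(P)}/f(P)`;
put `p = P_i` and `q = min (f(P)) 1`. Cut the range of `q` into the geometric layers
`(r^(k+1), r^k]`. On layer `k` the weight is at most `r⁻¹ · r⁻ᵏ · 1{p ≤ r^k}`, and
superuniformity `Pr(p ≤ r^k) ≤ r^k` turns `r⁻ᵏ` into the conditioning factor `Pr(p ≤ r^k)⁻¹`.
With `b_k = Pr(q ≤ r^k | p ≤ r^k)`, the conditional mass of layer `k` is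
`b_k - Pr(q ≤ r^(k+1) | p ≤ r^k)`, and PRDS applied to the nondecreasing set
`{min f 1 ≤ r^(k+1)}` bounds the subtracted term from below by `b_(k+1)`. The layer
contributions thus telescope to at most `b_0 ≤ 1`, so the expectation is at most `r⁻¹` for
every `r < 1`.
-/

theorem ENNReal.tsum_le_of_add_succ_le {a b : ℕ → ℝ≥0∞} (h : ∀ k, a k + b (k + 1) ≤ b k) :
    ∑' k, a k ≤ b 0 := by
  have partial_le : ∀ K, ∑ k ∈ Finset.range K, a k + b K ≤ b 0 := by
    intro K
    induction K with
    | zero => simp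
    | succ K ih =>
      calc ∑ k ∈ Finset.range (K + 1), a k + b (K + 1)
          = ∑ k ∈ Finset.range K, a k + (a K + b (K + 1)) := by
            rw [Finset.sum_range_succ, add_assoc]
        _ ≤ ∑ k ∈ Finset.range K, a k + b K := by gcongr; exact h K
        _ ≤ b 0 := ih
  exact ENNReal.tsum_le_of_sum_range_le fun K => le_self_add.trans (partial_le K)

theorem ProbabilityTheory.inv_mul_measure_inter_diff_add_cond_le {Ω : Type*}
    [MeasurableSpace Ω] {μ : Measure Ω} {E B B' : Set Ω} {a : ℝ≥0∞} (hE : MeasurableSet E)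
    (hB' : MeasurableSet B') (hB'B : B' ⊆ B) (ha : μ E ≤ a) :
    a⁻¹ * μ (E ∩ (B \ B')) + μ[|E] B' ≤ μ[|E] B := by
  have hsplit : μ (E ∩ B') + μ (E ∩ (B \ B')) = μ (E ∩ B) := by
    rw [← measure_inter_add_sdiff (E ∩ B) hB', Set.inter_assoc, Set.inter_eq_right.mpr hB'B,
      Set.inter_sdiff_assoc]
  rw [cond_apply hE, cond_apply hE, ← hsplit, mul_add, add_comm]
  gcongr

theorem ENNReal.ofReal_inv_le_inv_mul_inv_pow {r y : ℝ} {k : ℕ} (hr : 0 < r)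
    (hy : r ^ (k + 1) < y) :
    ENNReal.ofReal y⁻¹ ≤ ENNReal.ofReal r⁻¹ * (ENNReal.ofReal (r ^ k))⁻¹ := by
  rw [← ENNReal.ofReal_inv_of_pos (pow_pos hr k), ← ENNReal.ofReal_mul (inv_nonneg.mpr hr.le),
    ← mul_inv, ← pow_succ']
  exact ENNReal.ofReal_le_ofReal (inv_anti₀ (pow_pos hr _) hy.le)

/-- `1{p ≤ τ} / τ`, which is `0` for `τ ≤ 0` because `ofReal` truncates negatives. -/
noncomputable def thresholdWeight (p τ : ℝ) : ℝ≥0∞ :=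
  if p ≤ τ then ENNReal.ofReal τ⁻¹ else 0

theorem thresholdWeight_le_thresholdWeight_min_one {p τ : ℝ} (hp : p ≤ 1) :
    thresholdWeight p τ ≤ thresholdWeight p (min τ 1) := by
  rcases le_total τ 1 with hτ | hτ
  · rw [min_eq_left hτ]
  · rw [min_eq_right hτ, thresholdWeight, thresholdWeight, if_pos hp, inv_one, ENNReal.ofReal_one]
    split_ifs
    · exact ENNReal.ofReal_le_one.mpr (inv_le_one_of_one_le₀ hτ)
    · exact zero_le_one

section Layers

variable {Ω : Type*} {p q : Ω → ℝ} {r : ℝ}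

def thresholdLayer (p q : Ω → ℝ) (r : ℝ) (k : ℕ) : Set Ω :=
  {ω | p ω ≤ r ^ k} ∩ ({ω | q ω ≤ r ^ k} \ {ω | q ω ≤ r ^ (k + 1)})

theorem thresholdWeight_le_tsum_indicator_thresholdLayer (hq1 : ∀ ω, q ω ≤ 1) (hr0 : 0 < r)
    (hr1 : r < 1) (ω : Ω) :
    thresholdWeight (p ω) (q ω) ≤ ENNReal.ofReal r⁻¹ *
      ∑' k, (thresholdLayer p q r k).indicator (fun _ => (ENNReal.ofReal (r ^ k))⁻¹) ω := by
  unfold thresholdWeight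
  split_ifs with hpq
  swap
  · exact zero_le
  rcases le_or_gt (q ω) 0 with hq0 | hq0
  · rw [ENNReal.ofReal_eq_zero.mpr (inv_nonpos.mpr hq0)]
    exact zero_le
  obtain ⟨k, hk_lt, hk_le⟩ := exists_nat_pow_near_of_lt_one hq0 (hq1 ω) hr0 hr1
  have hmem : ω ∈ thresholdLayer p q r k := ⟨hpq.trans hk_le, hk_le, hk_lt.not_ge⟩
  calc ENNReal.ofReal (q ω)⁻¹ ≤ ENNReal.ofReal r⁻¹ * (ENNReal.ofReal (r ^ k))⁻¹ :=
        ENNReal.ofReal_inv_le_inv_mul_inv_pow hr0 hk_lt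
    _ ≤ _ := by
        gcongr
        refine le_of_eq_of_le ?_ (ENNReal.le_tsum k)
        rw [Set.indicator_of_mem hmem]

variable [MeasurableSpace Ω] {μ : Measure Ω}

theorem measurableSet_thresholdLayer (hp : Measurable p) (hq : Measurable q) (k : ℕ) :
    MeasurableSet (thresholdLayer p q r k) :=
  (measurableSet_le hp measurable_const).inter
    ((measurableSet_le hq measurable_const).diff (measurableSet_le hq measurable_const))

variable (hp : Measurable p) (hq : Measurable q)
  (hsup : ∀ u ∈ Set.Icc (0 : ℝ) 1, μ {ω | p ω ≤ u} ≤ ENNReal.ofReal u)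
  (hmono : ∀ s t : ℝ, 0 < s → s ≤ t → t ≤ 1 →
    μ[|{ω | p ω ≤ s}] {ω | q ω ≤ s} ≤ μ[|{ω | p ω ≤ t}] {ω | q ω ≤ s})
include hp hq hsup hmono

theorem tsum_inv_pow_mul_measure_thresholdLayer_le_one (hr0 : 0 < r) (hr1 : r < 1) :
    ∑' k, (ENNReal.ofReal (r ^ k))⁻¹ * μ (thresholdLayer p q r k) ≤ 1 := by
  refine (ENNReal.tsum_le_of_add_succ_le
    (b := fun k => μ[|{ω | p ω ≤ r ^ k}] {ω | q ω ≤ r ^ k}) fun k => ?_).trans prob_le_one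
  have hrk : r ^ (k + 1) ≤ r ^ k := pow_le_pow_of_le_one hr0.le hr1.le k.le_succ
  calc (ENNReal.ofReal (r ^ k))⁻¹ * μ (thresholdLayer p q r k)
        + μ[|{ω | p ω ≤ r ^ (k + 1)}] {ω | q ω ≤ r ^ (k + 1)}
      ≤ (ENNReal.ofReal (r ^ k))⁻¹ * μ (thresholdLayer p q r k)
        + μ[|{ω | p ω ≤ r ^ k}] {ω | q ω ≤ r ^ (k + 1)} :=
        add_le_add le_rfl (hmono _ _ (pow_pos hr0 _) hrk (pow_le_one₀ hr0.le hr1.le))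
    _ ≤ μ[|{ω | p ω ≤ r ^ k}] {ω | q ω ≤ r ^ k} :=
        inv_mul_measure_inter_diff_add_cond_le (measurableSet_le hp measurable_const)
          (measurableSet_le hq measurable_const) (fun ω hω => le_trans hω hrk)
          (hsup _ ⟨(pow_pos hr0 k).le, pow_le_one₀ hr0.le hr1.le⟩)

theorem lintegral_thresholdWeight_le_inv (hq1 : ∀ ω, q ω ≤ 1) (hr0 : 0 < r) (hr1 : r < 1) :
    ∫⁻ ω, thresholdWeight (p ω) (q ω) ∂μ ≤ ENNReal.ofReal r⁻¹ := by
  have hlayer := measurableSet_thresholdLayer (r := r) hp hq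
  calc ∫⁻ ω, thresholdWeight (p ω) (q ω) ∂μ
      ≤ ∫⁻ ω, ENNReal.ofReal r⁻¹ *
          ∑' k, (thresholdLayer p q r k).indicator (fun _ => (ENNReal.ofReal (r ^ k))⁻¹) ω ∂μ :=
        lintegral_mono (thresholdWeight_le_tsum_indicator_thresholdLayer hq1 hr0 hr1)
    _ = ENNReal.ofReal r⁻¹ * ∑' k, (ENNReal.ofReal (r ^ k))⁻¹ * μ (thresholdLayer p q r k) := by
        rw [lintegral_const_mul' _ _ ENNReal.ofReal_ne_top,
          lintegral_tsum fun k => (measurable_const.indicator (hlayer k)).aemeasurable]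
        simp only [lintegral_indicator_const (hlayer _)]
    _ ≤ ENNReal.ofReal r⁻¹ := by
        grw [tsum_inv_pow_mul_measure_thresholdLayer_le_one hp hq hsup hmono hr0 hr1, mul_one]

theorem lintegral_thresholdWeight_le_one (hq1 : ∀ ω, q ω ≤ 1) :
    ∫⁻ ω, thresholdWeight (p ω) (q ω) ∂μ ≤ 1 := by
  refine ENNReal.le_of_forall_pos_le_add fun ε hε _ => ?_
  have hε' : (0 : ℝ) < ε := hε
  have h := lintegral_thresholdWeight_le_inv hp hq hsup hmono hq1 (r := (1 + ε)⁻¹)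
    (by positivity) (inv_lt_one_of_one_lt₀ (by linarith))
  rwa [inv_inv, ENNReal.ofReal_add zero_le_one ε.coe_nonneg, ENNReal.ofReal_one,
    ENNReal.ofReal_coe_nnreal] at h

end Layers

def IsPRDSOn {Ω : Type*} [MeasurableSpace Ω] (μ : Measure Ω) {n : ℕ} (P : Ω → Fin n → ℝ)
    (i : Fin n) : Prop :=
  ∀ D : Set (Fin n → ℝ), MeasurableSet D →
    (∀ x ∈ D, ∀ y ∈ Set.Icc (0 : Fin n → ℝ) 1, x ≤ y → y ∈ D) →
    ∀ s t : ℝ, 0 < s → s ≤ t → t ≤ 1 → 0 < μ {ω | P ω i ≤ s} →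
      (μ[|{ω | P ω i ≤ s}]) {ω | P ω ∈ D} ≤ (μ[|{ω | P ω i ≤ t}]) {ω | P ω ∈ D}

theorem IsPRDSOn.cond_le_cond {Ω : Type*} [MeasurableSpace Ω] {μ : Measure Ω} {n : ℕ}
    {P : Ω → Fin n → ℝ} {i : Fin n} (hP : IsPRDSOn μ P i) (hPrange : ∀ ω, P ω ∈ Set.Icc 0 1)
    {g : (Fin n → ℝ) → ℝ} (hg : Measurable g) (hg_anti : AntitoneOn g (Set.Icc 0 1))
    {s t : ℝ} (v : ℝ) (hs : 0 < s) (hst : s ≤ t) (ht : t ≤ 1) :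
    μ[|{ω | P ω i ≤ s}] {ω | g (P ω) ≤ v} ≤ μ[|{ω | P ω i ≤ t}] {ω | g (P ω) ≤ v} := by
  rcases eq_or_ne (μ {ω | P ω i ≤ s}) 0 with h0 | hpos
  · simp [cond_eq_zero_of_meas_eq_zero h0]
  have hD : {ω | g (P ω) ≤ v} = {ω | P ω ∈ Set.Icc 0 1 ∩ g ⁻¹' Set.Iic v} := by
    ext ω
    exact (and_iff_right (hPrange ω)).symm
  rw [hD]
  refine hP _ (measurableSet_Icc.inter (hg measurableSet_Iic)) ?_ s t hs hst ht
    (pos_iff_ne_zero.mpr hpos)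
  exact fun x hx y hy hxy => ⟨hy, (hg_anti hx.1 hy hxy).trans hx.2⟩

theorem superuniformity_lemma_prds_general
    {Ω : Type*} [MeasurableSpace Ω] (μ : Measure Ω)
    {n : ℕ} (P : Ω → Fin n → ℝ)
    (hPmeas : ∀ j, Measurable fun ω => P ω j)
    (hPrange : ∀ ω j, P ω j ∈ Set.Icc (0 : ℝ) 1)
    (i : Fin n)
    (hsup : ∀ u ∈ Set.Icc (0 : ℝ) 1, μ {ω | P ω i ≤ u} ≤ ENNReal.ofReal u)
    -- PRDS on index `i`: for every measurable nondecreasing `D ⊆ [0,1]^n` and all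
    -- `0 < s ≤ t ≤ 1` with `Pr(P_i ≤ s) > 0`, `Pr(P ∈ D | P_i ≤ s) ≤ Pr(P ∈ D | P_i ≤ t)`.
    (hPRDS : ∀ D : Set (Fin n → ℝ), MeasurableSet D →
      (∀ x ∈ D, ∀ y ∈ Set.Icc (0 : Fin n → ℝ) 1, x ≤ y → y ∈ D) →
      ∀ s t : ℝ, 0 < s → s ≤ t → t ≤ 1 → 0 < μ {ω | P ω i ≤ s} →
        (μ[|{ω | P ω i ≤ s}]) {ω | P ω ∈ D} ≤ (μ[|{ω | P ω i ≤ t}]) {ω | P ω ∈ D})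
    (f : (Fin n → ℝ) → ℝ) (hf : Measurable f)
    (hf_anti : ∀ x ∈ Set.Icc (0 : Fin n → ℝ) 1, ∀ y ∈ Set.Icc (0 : Fin n → ℝ) 1,
      x ≤ y → f y ≤ f x) :
    ∫⁻ ω, (if P ω i ≤ f (P ω) then ENNReal.ofReal (f (P ω))⁻¹ else 0) ∂μ ≤ 1 := by
  have hP : Measurable P := measurable_pi_iff.mpr hPmeas
  have hPmem : ∀ ω, P ω ∈ Set.Icc 0 1 := fun ω =>
    ⟨fun j => (hPrange ω j).1, fun j => (hPrange ω j).2⟩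
  set g : (Fin n → ℝ) → ℝ := fun x => min (f x) 1
  have hg : Measurable g := hf.min measurable_const
  have hg_anti : AntitoneOn g (Set.Icc 0 1) := fun x hx y hy hxy =>
    min_le_min_right 1 (hf_anti x hx y hy hxy)
  calc ∫⁻ ω, thresholdWeight (P ω i) (f (P ω)) ∂μ
      ≤ ∫⁻ ω, thresholdWeight (P ω i) (g (P ω)) ∂μ :=
        lintegral_mono fun ω => thresholdWeight_le_thresholdWeight_min_one (hPrange ω i).2
    _ ≤ 1 :=
        lintegral_thresholdWeight_le_one (hPmeas i) (hg.comp hP) hsup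
          (fun s t hs hst ht => IsPRDSOn.cond_le_cond hPRDS hPmem hg hg_anti s hs hst ht)
          (fun ω => min_le_right _ _)

/-- **Super-uniformity lemma under positive dependence (PRDS).**
Let `P = (P_1,…,P_n)` be a `[0,1]^n`-valued random vector which is PRDS on index `i`, let
`P_i` be superuniform, and let `f : [0,1]^n → [0,∞)` be measurable and coordinatewise
nonincreasing. Then `E[ 1{P_i ≤ f(P)} / f(P) ] ≤ 1`, the ratio being interpreted as `0`
when the indicator vanishes (superuniformity gives `Pr(P_i = 0) = 0`, so
`{P_i ≤ f(P), f(P) = 0}` is null). -/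
theorem superuniformity_lemma_prds
    {Ω : Type*} [MeasurableSpace Ω] (μ : Measure Ω) [IsProbabilityMeasure μ]
    {n : ℕ} (P : Ω → Fin n → ℝ)
    (hPmeas : ∀ j, Measurable fun ω => P ω j)
    (hPrange : ∀ ω j, P ω j ∈ Set.Icc (0 : ℝ) 1)
    (i : Fin n)
    (hsup : ∀ u ∈ Set.Icc (0 : ℝ) 1, μ {ω | P ω i ≤ u} ≤ ENNReal.ofReal u)
    -- PRDS on index `i`: for every measurable nondecreasing `D ⊆ [0,1]^n` and all
    -- `0 < s ≤ t ≤ 1` with `Pr(P_i ≤ s) > 0`, `Pr(P ∈ D | P_i ≤ s) ≤ Pr(P ∈ D | P_i ≤ t)`.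
    (hPRDS : ∀ D : Set (Fin n → ℝ), MeasurableSet D →
      (∀ x ∈ D, ∀ y ∈ Set.Icc (0 : Fin n → ℝ) 1, x ≤ y → y ∈ D) →
      ∀ s t : ℝ, 0 < s → s ≤ t → t ≤ 1 → 0 < μ {ω | P ω i ≤ s} →
        (μ[|{ω | P ω i ≤ s}]) {ω | P ω ∈ D} ≤ (μ[|{ω | P ω i ≤ t}]) {ω | P ω ∈ D})
    (f : (Fin n → ℝ) → ℝ) (hf : Measurable f)
    (hf_nonneg : ∀ x ∈ Set.Icc (0 : Fin n → ℝ) 1, 0 ≤ f x)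
    (hf_anti : ∀ x ∈ Set.Icc (0 : Fin n → ℝ) 1, ∀ y ∈ Set.Icc (0 : Fin n → ℝ) 1,
      x ≤ y → f y ≤ f x) :
    ∫⁻ ω, (if P ω i ≤ f (P ω) then ENNReal.ofReal (f (P ω))⁻¹ else 0) ∂μ ≤ 1 :=
  superuniformity_lemma_prds_general μ P hPmeas hPrange i hsup hPRDS f hf hf_anti
end

section
/- Equivalent characterizations of an anytime-valid p-value: let (F_t)_{t∈ℕ} be a filtration on a probability space and (P_t)_{t∈ℕ} an (F_t)-adapted process with values in [0,1]; for an (F_t)-stopping time τ taking values in ℕ ∪ {∞}, set P_τ := 1 on the event {τ = ∞}. Then the following are equivalent: (i) Pr(∃ t ∈ ℕ : P_t ≤ u) ≤ u for every u ∈ [0,1]; (ii) Pr(P_τ ≤ u) ≤ u for every u ∈ [0,1] and every (F_t)-stopping time τ. -/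
/-!
A stopped value `P_τ ≤ u < 1` forces `τ < ∞`, so the process has entered `[0, u]` at some time:
this gives (i) ⇒ (ii). Conversely, stopping at the first hitting time of `[0, u]`, a stopping
time because `P` is adapted, turns the event `{∃ t, P t ≤ u}` into `{P_τ ≤ u}`. For `u = 1`
both bounds are trivial.
-/

open MeasureTheory

section

variable {Ω β : Type*}

lemma setOf_dite_le_subset_exists_le [LE β] {P : ℕ → Ω → β} {τ : Ω → ℕ∞} {c u : β}
    (hcu : ¬c ≤ u) :
    {ω | (if _ : τ ω ≠ ⊤ then P (τ ω).toNat ω else c) ≤ u} ⊆ {ω | ∃ t, P t ω ≤ u} := by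
  intro ω hω
  by_cases hτ : τ ω ≠ ⊤
  · exact ⟨(τ ω).toNat, by simpa only [Set.mem_ofPred_eq, dif_pos hτ] using hω⟩
  · simp only [Set.mem_ofPred_eq, dif_neg hτ] at hω
    exact absurd hω hcu

lemma exists_le_subset_setOf_hittingAfter_le [Preorder β] (P : ℕ → Ω → β) (c u : β) :
    {ω | ∃ t, P t ω ≤ u} ⊆
      {ω | (if _ : (hittingAfter P (Set.Iic u) 0 ω : ℕ∞) ≠ ⊤
        then P (ENat.toNat (hittingAfter P (Set.Iic u) 0 ω)) ω else c) ≤ u} := by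
  rintro ω ⟨t, ht⟩
  have hhit : ∃ j, 0 ≤ j ∧ P j ω ∈ Set.Iic u := ⟨t, t.zero_le, ht⟩
  have hne : hittingAfter P (Set.Iic u) 0 ω ≠ ⊤ := by
    simpa [hittingAfter_eq_top_iff] using hhit
  simp only [Set.mem_ofPred_eq, dif_pos hne]
  have hmem := hittingAfter_mem_set hhit
  -- Mathlib reads the hitting time through `WithTop.untopA`; on `↑n` it agrees with `ENat.toNat`.
  lift hittingAfter P (Set.Iic u) 0 ω to ℕ using hne with n
  exact hmem

lemma measure_le_ofReal_of_one_le {m : MeasurableSpace Ω} (μ : Measure Ω)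
    [IsProbabilityMeasure μ] (s : Set Ω) {u : ℝ} (hu : 1 ≤ u) : μ s ≤ ENNReal.ofReal u :=
  prob_le_one.trans (ENNReal.one_le_ofReal.mpr hu)

end

theorem anytime_valid_pvalue_iff_stopped_general
    {Ω : Type*} {m : MeasurableSpace Ω} (μ : Measure Ω) [IsProbabilityMeasure μ]
    (𝓕 : Filtration ℕ m) (P : ℕ → Ω → ℝ)
    (hadapted : Adapted 𝓕 P) :
    (∀ u ∈ Set.Icc (0 : ℝ) 1, μ {ω | ∃ t : ℕ, P t ω ≤ u} ≤ ENNReal.ofReal u) ↔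
      (∀ τ : Ω → ℕ∞, (∀ t : ℕ, MeasurableSet[𝓕 t] {ω | τ ω ≤ (t : ℕ∞)}) →
        ∀ u ∈ Set.Icc (0 : ℝ) 1,
          μ {ω | (if h : τ ω ≠ ⊤ then P ((τ ω).toNat) ω else 1) ≤ u}
            ≤ ENNReal.ofReal u) := by
  refine ⟨fun hexists τ _ u hu => ?_, fun hstopped u hu => ?_⟩
  · rcases lt_or_ge u 1 with hu1 | hu1
    · exact (measure_mono (setOf_dite_le_subset_exists_le hu1.not_ge)).trans (hexists u hu)
    · exact measure_le_ofReal_of_one_le μ _ hu1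
  · exact (measure_mono (exists_le_subset_setOf_hittingAfter_le P 1 u)).trans
      (hstopped _ (hadapted.isStoppingTime_hittingAfter measurableSet_Iic) u hu)

/-- **Equivalent characterizations of an anytime-valid p-value.**
Let `(𝓕 t)` be a filtration, `(P t)` an adapted `[0,1]`-valued process, and for a stopping
time `τ : Ω → ℕ∞` (i.e. `{τ ≤ t} ∈ 𝓕 t` for all `t`) set `P_τ := 1` on `{τ = ∞}`. Then the
following are equivalent:
(i) `Pr(∃ t, P t ≤ u) ≤ u` for all `u ∈ [0,1]`;
(ii) `Pr(P_τ ≤ u) ≤ u` for all `u ∈ [0,1]` and all stopping times `τ`. -/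
theorem anytime_valid_pvalue_iff_stopped
    {Ω : Type*} {m : MeasurableSpace Ω} (μ : Measure Ω) [IsProbabilityMeasure μ]
    (𝓕 : Filtration ℕ m) (P : ℕ → Ω → ℝ)
    (hadapted : Adapted 𝓕 P)
    (hPrange : ∀ t ω, P t ω ∈ Set.Icc (0 : ℝ) 1) :
    (∀ u ∈ Set.Icc (0 : ℝ) 1, μ {ω | ∃ t : ℕ, P t ω ≤ u} ≤ ENNReal.ofReal u) ↔
      (∀ τ : Ω → ℕ∞, (∀ t : ℕ, MeasurableSet[𝓕 t] {ω | τ ω ≤ (t : ℕ∞)}) →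
        ∀ u ∈ Set.Icc (0 : ℝ) 1,
          μ {ω | (if h : τ ω ≠ ⊤ then P ((τ ω).toNat) ω else 1) ≤ u}
            ≤ ENNReal.ofReal u) :=
  anytime_valid_pvalue_iff_stopped_general μ 𝓕 P hadapted
end

section
/- Decentralized testing with stale upper bounds rejects a subset of centralized BH: let α ∈ (0,1), N ≥ 1, let P : {1,…,N} → [0,1] be the current p-value vector, and let (Q^b)_{b∈B} be any finite family of vectors Q^b : {1,…,N} → [0,1] satisfying Q^b_i ≥ P_i for all i and b (e.g., stale copies of nonincreasing anytime-valid p-values, with unknown p-values set to 1, as arise from dropped packets or time-varying graphs). Then ⋃_{b∈B} {i : Q^b_i ≤ α·k̂_α(Q^b)/N} ⊆ Rej_α(P); that is, every hypothesis rejected by any agent's local BH test on its stale information lies in the centralized BH rejection set for the current p-values. -/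
open Finset

open Classical in
/-- **Decentralized testing with stale upper bounds rejects a subset of centralized BH.**
Let `P` be the current p-value vector and `(Q^b)_{b ∈ B}` any finite family of vectors with
`Q^b_i ≥ P_i` for all `i, b` (stale copies of nonincreasing anytime-valid p-values, with
unknown p-values set to `1`, as arise from dropped packets or time-varying graphs). Then
every hypothesis rejected by some agent's local BH test on its stale information lies in
the centralized BH rejection set for the current p-values:
`⋃_b {i : Q^b_i ≤ α k̂_α(Q^b) / N} ⊆ Rej_α(P)`. -/
theorem stale_local_bh_subset_bhRej
    {N : ℕ} (hN : 1 ≤ N) (α : ℝ) (hα : α ∈ Set.Ioo (0 : ℝ) 1)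
    (P : Fin N → ℝ) (hPrange : ∀ i, P i ∈ Set.Icc (0 : ℝ) 1)
    {B : Type*} [Fintype B] (Q : B → Fin N → ℝ)
    (hQrange : ∀ b i, Q b i ∈ Set.Icc (0 : ℝ) 1)
    (hQstale : ∀ b i, P i ≤ Q b i) :
    (Finset.univ.biUnion fun b : B =>
        Finset.univ.filter fun i => Q b i ≤ α * (bhCount α (Q b)) / N)
      ⊆ bhRej α P := by
  intro i hi
  simp only [Finset.mem_biUnion, Finset.mem_filter, Finset.mem_univ, true_and] at hi
  obtain ⟨b, hb⟩ := hi
  have hcard : (Fintype.card (Fin N) : ℝ) = (N : ℝ) := by simp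
  have hcount : bhCount α (Q b) ≤ bhCount α P := by
    apply Nat.findGreatest_mono _ le_rfl
    intro k hk
    refine hk.trans (Finset.card_le_card ?_)
    intro j hj
    simp only [Finset.mem_filter, Finset.mem_univ, true_and] at hj ⊢
    exact le_trans (hQstale b j) hj
  have hmono : α * (bhCount α (Q b)) / N ≤ α * (bhCount α P) / N := by
    apply div_le_div_of_nonneg_right _ (by positivity)
    exact mul_le_mul_of_nonneg_left (by exact_mod_cast hcount) hα.1.le
  simp only [bhRej, Finset.mem_filter, Finset.mem_univ, true_and, hcard]
  calc P i ≤ Q b i := hQstale b i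
    _ ≤ α * (bhCount α (Q b)) / N := hb
    _ ≤ α * (bhCount α P) / N := hmono
end
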